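/- arXiv:1303.1124 — 3 statements merged into one kernel-verified Lean document; each statement's English description precedes it below -/
import Mathlib

section
/- Let u, v : ℝ × ℝ → ℝ be smooth functions satisfying the A_2 Toda system u_{xy} = -exp(2u - v), v_{xy} = -exp(-u + 2v). Then the quantity I = u_{xx} + v_{xx} - u_x^2 - v_x^2 + u_x v_x satisfies ∂I/∂y = 0. -/
noncomputable section

/-- Partial derivative in the first (x) variable. -/
def dx (f : ℝ × ℝ → ℝ) : ℝ × ℝ → ℝ := fun p => deriv (fun t => f (t, p.2)) p.1

/-- Partial derivative in the second (y) variable. -/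
def dy (f : ℝ × ℝ → ℝ) : ℝ × ℝ → ℝ := fun p => deriv (fun t => f (p.1, t)) p.2

/-- Iterated x-derivative. -/
def dxIter : ℕ → (ℝ × ℝ → ℝ) → (ℝ × ℝ → ℝ)
  | 0, f => f
  | n + 1, f => dx (dxIter n f)

/-- The first-order operator `(∂ + f)` applied to `ψ`. -/
def op (f ψ : ℝ × ℝ → ℝ) : ℝ × ℝ → ℝ := fun p => dx ψ p + f p * ψ p

/-- Composition `(∂ + f₁)(∂ + f₂)⋯(∂ + fₘ) ψ`, applying the rightmost factor first. -/
def opProd : List (ℝ × ℝ → ℝ) → (ℝ × ℝ → ℝ) → (ℝ × ℝ → ℝ)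
  | [], ψ => ψ
  | f :: fs, ψ => op f (opProd fs ψ)

lemma hasDerivAt_dx {f : ℝ × ℝ → ℝ} (hf : Differentiable ℝ f) (p : ℝ × ℝ) :
    HasDerivAt (fun t => f (t, p.2)) (fderiv ℝ f p ((1:ℝ), (0:ℝ))) p.1 := by
  have hg : HasDerivAt (fun t : ℝ => (t, p.2)) ((1:ℝ), (0:ℝ)) p.1 :=
    (hasDerivAt_id p.1).prodMk (hasDerivAt_const p.1 p.2)
  exact (hf p).hasFDerivAt.comp_hasDerivAt p.1 hg

lemma hasDerivAt_dy {f : ℝ × ℝ → ℝ} (hf : Differentiable ℝ f) (p : ℝ × ℝ) :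
    HasDerivAt (fun t => f (p.1, t)) (fderiv ℝ f p ((0:ℝ), (1:ℝ))) p.2 := by
  have hg : HasDerivAt (fun t : ℝ => (p.1, t)) ((0:ℝ), (1:ℝ)) p.2 :=
    (hasDerivAt_const p.2 p.1).prodMk (hasDerivAt_id p.2)
  exact (hf p).hasFDerivAt.comp_hasDerivAt p.2 hg

lemma dx_eq {f : ℝ × ℝ → ℝ} (hf : Differentiable ℝ f) (p : ℝ × ℝ) :
    dx f p = fderiv ℝ f p ((1:ℝ), (0:ℝ)) := (hasDerivAt_dx hf p).deriv

lemma dy_eq {f : ℝ × ℝ → ℝ} (hf : Differentiable ℝ f) (p : ℝ × ℝ) :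
    dy f p = fderiv ℝ f p ((0:ℝ), (1:ℝ)) := (hasDerivAt_dy hf p).deriv

lemma contDiff_dx {f : ℝ × ℝ → ℝ} (hf : ContDiff ℝ (⊤ : ℕ∞) f) : ContDiff ℝ (⊤ : ℕ∞) (dx f) := by
  have h : dx f = fun p => fderiv ℝ f p ((1:ℝ), (0:ℝ)) :=
    funext (dx_eq (hf.differentiable (by simp)))
  rw [h]
  exact (hf.fderiv_right (by simp)).clm_apply contDiff_const

lemma clairaut {f : ℝ × ℝ → ℝ} (hf : ContDiff ℝ (⊤ : ℕ∞) f) (p : ℝ × ℝ) :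
    dy (dx f) p = dx (dy f) p := by
  have hd : Differentiable ℝ f := hf.differentiable (by simp)
  have hf' : ContDiff ℝ (⊤ : ℕ∞) (fderiv ℝ f) := hf.fderiv_right (by simp)
  have hd' : Differentiable ℝ (fderiv ℝ f) := hf'.differentiable (by simp)
  have hdx : dx f = fun q => fderiv ℝ f q ((1:ℝ), (0:ℝ)) :=
    funext (dx_eq hd)
  have hdy : dy f = fun q => fderiv ℝ f q ((0:ℝ), (1:ℝ)) := by
    funext q
    have hg : HasDerivAt (fun t : ℝ => (q.1, t)) ((0:ℝ), (1:ℝ)) q.2 :=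
      (hasDerivAt_const q.2 q.1).prodMk (hasDerivAt_id q.2)
    exact ((hd q).hasFDerivAt.comp_hasDerivAt q.2 hg).deriv
  have hsym := second_derivative_symmetric (f := f) (f' := fderiv ℝ f)
    (f'' := fderiv ℝ (fderiv ℝ f) p) (x := p)
    (fun y => (hd y).hasFDerivAt) (hd' p).hasFDerivAt ((1:ℝ),(0:ℝ)) ((0:ℝ),(1:ℝ))
  have h1 : dy (dx f) p = fderiv ℝ (fderiv ℝ f) p ((0:ℝ),(1:ℝ)) ((1:ℝ),(0:ℝ)) := by
    rw [dy_eq ((contDiff_dx hf).differentiable (by simp)) p]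
    conv_lhs => rw [hdx]
    rw [fderiv_clm_apply (hd' p) (differentiableAt_const _)]
    simp
  have h2 : dx (dy f) p = fderiv ℝ (fderiv ℝ f) p ((1:ℝ),(0:ℝ)) ((0:ℝ),(1:ℝ)) := by
    have hcd : ContDiff ℝ (⊤ : ℕ∞) (dy f) := by
      rw [hdy]; exact hf'.clm_apply contDiff_const
    rw [dx_eq (hcd.differentiable (by simp)) p]
    conv_lhs => rw [hdy]
    rw [fderiv_clm_apply (hd' p) (differentiableAt_const _)]
    simp
  rw [h1, h2, hsym]

lemma sliceY {g : ℝ × ℝ → ℝ} (hg : ContDiff ℝ (⊤ : ℕ∞) g) (p : ℝ × ℝ) :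
    HasDerivAt (fun t => g (p.1, t)) (dy g p) p.2 := by
  have h := hasDerivAt_dy (hg.differentiable (by simp)) p
  rwa [← dy_eq (hg.differentiable (by simp)) p] at h

lemma sliceX {g : ℝ × ℝ → ℝ} (hg : ContDiff ℝ (⊤ : ℕ∞) g) (p : ℝ × ℝ) :
    HasDerivAt (fun t => g (t, p.2)) (dx g p) p.1 := by
  have h := hasDerivAt_dx (hg.differentiable (by simp)) p
  rwa [← dx_eq (hg.differentiable (by simp)) p] at h

/-- For smooth solutions of the `A₂` Toda system, the quantity
`I = u_{xx} + v_{xx} - u_x² - v_x² + u_x v_x` satisfies `∂I/∂y = 0`. -/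
theorem stmt1 (u v : ℝ × ℝ → ℝ) (hu : ContDiff ℝ (⊤ : ℕ∞) u) (hv : ContDiff ℝ (⊤ : ℕ∞) v)
    (hueq : ∀ p, dy (dx u) p = -Real.exp (2 * u p - v p))
    (hveq : ∀ p, dy (dx v) p = -Real.exp (-u p + 2 * v p)) :
    ∀ p, dy (fun q =>
      dx (dx u) q + dx (dx v) q - (dx u q) ^ 2 - (dx v q) ^ 2 + dx u q * dx v q) p = 0 := by
  rintro ⟨x, y⟩
  set p : ℝ × ℝ := (x, y) with hp
  have hdxu : ContDiff ℝ (⊤ : ℕ∞) (dx u) := contDiff_dx hu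
  have hdxv : ContDiff ℝ (⊤ : ℕ∞) (dx v) := contDiff_dx hv
  have hA := sliceY (contDiff_dx hdxu) p
  have hB := sliceY (contDiff_dx hdxv) p
  have ha := sliceY hdxu p
  have hb := sliceY hdxv p
  have hI := (((hA.add hB).sub (ha.pow 2)).sub (hb.pow 2)).add (ha.mul hb)
  -- value of dy (dx (dx u)) p
  have hU := sliceX hu p
  have hV := sliceX hv p
  have hE1 : dy (dx (dx u)) p
      = -(Real.exp (2 * u p - v p) * (2 * dx u p - dx v p)) := by
    rw [clairaut hdxu p]
    have hfun : dy (dx u) = fun q => -Real.exp (2 * u q - v q) := funext hueq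
    rw [hfun]
    exact ((((hU.const_mul 2).sub hV).exp).neg).deriv
  have hE2 : dy (dx (dx v)) p
      = -(Real.exp (-u p + 2 * v p) * (-dx u p + 2 * dx v p)) := by
    rw [clairaut hdxv p]
    have hfun : dy (dx v) = fun q => -Real.exp (-u q + 2 * v q) := funext hveq
    rw [hfun]
    exact (((hU.neg.add (hV.const_mul 2)).exp).neg).deriv
  show dy (fun q =>
      dx (dx u) q + dx (dx v) q - (dx u q) ^ 2 - (dx v q) ^ 2 + dx u q * dx v q) p = 0
  rw [show dy (fun q =>
      dx (dx u) q + dx (dx v) q - (dx u q) ^ 2 - (dx v q) ^ 2 + dx u q * dx v q) p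
      = _ from hI.deriv]
  rw [hE1, hE2, hueq p, hveq p]
  show -(Real.exp (2 * u p - v p) * (2 * dx u p - dx v p))
      + -(Real.exp (-u p + 2 * v p) * (-dx u p + 2 * dx v p))
      - 2 * dx u p ^ 1 * -Real.exp (2 * u p - v p)
      - 2 * dx v p ^ 1 * -Real.exp (-u p + 2 * v p)
      + (-Real.exp (2 * u p - v p) * dx v p + dx u p * -Real.exp (-u p + 2 * v p)) = 0
  ring
end
end

section
/- Let n ≥ 1 and let u^1, ..., u^n : ℝ × ℝ → ℝ be smooth functions satisfying the A_n Toda field theory u^i_{xy} = -exp(∑_j a_{ij} u^j) where A = (a_{ij}) is the Cartan matrix of A_n (a_{ii} = 2, a_{i,i±1} = -1, a_{ij} = 0 otherwise). Set f_0 = -u^1_x, f_k = u^k_x - u^{k+1}_x for 1 ≤ k ≤ n-1, and f_n = u^n_x. Then ∑_{k=0}^{n} f_k = 0 and, for the operator product (∂ + f_0)(∂ + f_1)⋯(∂ + f_n) = ∂^{n+1} + ∑_{j=1}^{n} I_j ∂^{n-j} with ∂ = ∂_x, each coefficient I_j satisfies ∂_y I_j = 0. -/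
noncomputable section

lemma diffAtX {f : ℝ × ℝ → ℝ} {p : ℝ × ℝ} (hf : DifferentiableAt ℝ f p) :
    DifferentiableAt ℝ (fun t => f (t, p.2)) p.1 := by
  have : DifferentiableAt ℝ (fun t : ℝ => (t, p.2)) p.1 :=
    differentiableAt_id.prodMk (differentiableAt_const _)
  exact hf.comp p.1 this

lemma diffAtY {f : ℝ × ℝ → ℝ} {p : ℝ × ℝ} (hf : DifferentiableAt ℝ f p) :
    DifferentiableAt ℝ (fun t => f (p.1, t)) p.2 := by
  have : DifferentiableAt ℝ (fun t : ℝ => (p.1, t)) p.2 :=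
    (differentiableAt_const _).prodMk differentiableAt_id
  exact hf.comp p.2 this

lemma hasDerivAtX {f : ℝ × ℝ → ℝ} (hf : ContDiff ℝ (⊤ : ℕ∞) f) (p : ℝ × ℝ) :
    HasDerivAt (fun t => f (t, p.2)) (dx f p) p.1 :=
  (diffAtX ((hf.differentiable (by simp)) p)).hasDerivAt

lemma hasDerivAtY {f : ℝ × ℝ → ℝ} (hf : ContDiff ℝ (⊤ : ℕ∞) f) (p : ℝ × ℝ) :
    HasDerivAt (fun t => f (p.1, t)) (dy f p) p.2 :=
  (diffAtY ((hf.differentiable (by simp)) p)).hasDerivAt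

lemma dx_fderiv {f : ℝ × ℝ → ℝ} (hf : ContDiff ℝ (⊤ : ℕ∞) f) (p : ℝ × ℝ) :
    dx f p = fderiv ℝ f p (1, 0) := by
  have h1 : HasDerivAt (fun t : ℝ => (t, p.2)) (1, 0) p.1 :=
    (hasDerivAt_id p.1).prodMk (hasDerivAt_const _ _)
  have h2 := ((hf.differentiable (by simp)) (p.1, p.2)).hasFDerivAt.comp_hasDerivAt p.1 h1
  exact h2.deriv

lemma dy_fderiv {f : ℝ × ℝ → ℝ} (hf : ContDiff ℝ (⊤ : ℕ∞) f) (p : ℝ × ℝ) :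
    dy f p = fderiv ℝ f p (0, 1) := by
  have h1 : HasDerivAt (fun t : ℝ => (p.1, t)) (0, 1) p.2 :=
    (hasDerivAt_const _ _).prodMk (hasDerivAt_id p.2)
  have h2 := ((hf.differentiable (by simp)) (p.1, p.2)).hasFDerivAt.comp_hasDerivAt p.2 h1
  exact h2.deriv

lemma contDiff_op {f ψ : ℝ × ℝ → ℝ} (hf : ContDiff ℝ (⊤ : ℕ∞) f) (hψ : ContDiff ℝ (⊤ : ℕ∞) ψ) :
    ContDiff ℝ (⊤ : ℕ∞) (op f ψ) :=
  (contDiff_dx hψ).add (hf.mul hψ)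

lemma contDiff_opProd {fs : List (ℝ × ℝ → ℝ)} {ψ : ℝ × ℝ → ℝ}
    (hfs : ∀ g ∈ fs, ContDiff ℝ (⊤ : ℕ∞) g) (hψ : ContDiff ℝ (⊤ : ℕ∞) ψ) :
    ContDiff ℝ (⊤ : ℕ∞) (opProd fs ψ) := by
  induction fs with
  | nil => exact hψ
  | cons f fs ih =>
    exact contDiff_op (hfs f (List.mem_cons_self))
      (ih fun g hg => hfs g (List.mem_cons_of_mem _ hg))

lemma dx_congr {f g : ℝ × ℝ → ℝ} (h : ∀ p, f p = g p) (p : ℝ × ℝ) : dx f p = dx g p := by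
  have : f = g := funext h
  rw [this]

lemma dx_zero (p : ℝ × ℝ) : dx (fun _ => (0:ℝ)) p = 0 := by
  simp [dx]

lemma dy_op {f h : ℝ × ℝ → ℝ} (hf : ContDiff ℝ (⊤ : ℕ∞) f) (hh : ContDiff ℝ (⊤ : ℕ∞) h) (p : ℝ × ℝ) :
    dy (op f h) p = dy (dx h) p + (dy f p * h p + f p * dy h p) := by
  have H : HasDerivAt (fun t => op f h (p.1, t))
      (dy (dx h) p + (dy f p * h p + f p * dy h p)) p.2 := by
    have h1 := hasDerivAtY (contDiff_dx hh) p
    have h2 := (hasDerivAtY hf p).fun_mul (hasDerivAtY hh p)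
    simpa [op, Prod.mk.eta] using h1.fun_add h2
  exact H.deriv

lemma dx_neg_mul {f h : ℝ × ℝ → ℝ} (hf : ContDiff ℝ (⊤ : ℕ∞) f) (hh : ContDiff ℝ (⊤ : ℕ∞) h) (p : ℝ × ℝ) :
    dx (fun q => -(f q * h q)) p = -(dx f p * h p + f p * dx h p) := by
  exact (((hasDerivAtX hf p).mul (hasDerivAtX hh p)).neg).deriv

lemma key (fs : List (ℝ × ℝ → ℝ)) (g : ℕ → ℝ × ℝ → ℝ)
    (hfs : ∀ h ∈ fs, ContDiff ℝ (⊤ : ℕ∞) h)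
    (hg : ∀ i, ContDiff ℝ (⊤ : ℕ∞) (g i))
    (htop : ∀ p, g fs.length p = 0)
    (hdy : ∀ i, i < fs.length → ∀ p, dy (fs.getD i (fun _ => 0)) p = g (i+1) p - g i p)
    (hdx : ∀ i, i + 1 < fs.length → ∀ p,
      dx (g (i+1)) p = g (i+1) p * (fs.getD (i+1) (fun _ => 0) p - fs.getD i (fun _ => 0) p))
    (ψ : ℝ × ℝ → ℝ) (hψ : ContDiff ℝ (⊤ : ℕ∞) ψ) (hψy : ∀ p, dy ψ p = 0) :
    ∀ p, dy (opProd fs ψ) p = -(g 0 p) * opProd fs.tail ψ p := by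
  induction fs generalizing g with
  | nil =>
    intro p
    have h0 : g 0 p = 0 := htop p
    show dy ψ p = -(g 0 p) * ψ p
    rw [hψy p, h0]; ring
  | cons f₀ fs' ih =>
    intro p
    have hf₀ : ContDiff ℝ (⊤ : ℕ∞) f₀ := hfs f₀ (List.mem_cons_self)
    have hfs' : ∀ h ∈ fs', ContDiff ℝ (⊤ : ℕ∞) h := fun h hh => hfs h (List.mem_cons_of_mem _ hh)
    have hh : ContDiff ℝ (⊤ : ℕ∞) (opProd fs' ψ) := contDiff_opProd hfs' hψ
    have htl : ∀ h ∈ fs'.tail, ContDiff ℝ (⊤ : ℕ∞) h := fun h hh => hfs' h (List.mem_of_mem_tail hh)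
    have hT : ContDiff ℝ (⊤ : ℕ∞) (opProd fs'.tail ψ) := contDiff_opProd htl hψ
    have ihh : ∀ q, dy (opProd fs' ψ) q = -(g 1 q) * opProd fs'.tail ψ q := by
      apply ih (fun i => g (i + 1)) hfs' (fun i => hg (i + 1)) (fun q => htop q)
      · intro i hi q
        have := hdy (i + 1) (by simpa using Nat.succ_lt_succ hi) q
        simpa using this
      · intro i hi q
        have := hdx (i + 1) (by simp only [List.length_cons]; omega) q
        simpa using this
    have e1 : dy (opProd (f₀ :: fs') ψ) p
        = dy (dx (opProd fs' ψ)) p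
          + (dy f₀ p * opProd fs' ψ p + f₀ p * dy (opProd fs' ψ) p) := dy_op hf₀ hh p
    have e2 : dy (dx (opProd fs' ψ)) p = dx (dy (opProd fs' ψ)) p := clairaut hh p
    have e3 : dx (dy (opProd fs' ψ)) p
        = -(dx (g 1) p * opProd fs'.tail ψ p + g 1 p * dx (opProd fs'.tail ψ) p) := by
      rw [dx_congr (g := fun q => -(g 1 q * opProd fs'.tail ψ q))
        (fun q => by rw [ihh q]; ring) p]
      exact dx_neg_mul (hg 1) hT p
    have e4 : dy f₀ p = g 1 p - g 0 p := by
      have := hdy 0 (Nat.succ_pos _) p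
      simpa using this
    rw [List.tail_cons, e1, e2, e3, e4, ihh p]
    match fs' with
    | [] =>
      have hg1 : ∀ q, g 1 q = 0 := fun q => htop q
      have : dx (g 1) p = 0 := by
        rw [dx_congr (g := fun _ => (0:ℝ)) hg1 p]; exact dx_zero p
      show _ = -(g 0 p) * ψ p
      rw [this, hg1 p]
      show -(0 * ψ p + 0 * dx ψ p) + ((0 - g 0 p) * ψ p + f₀ p * (-0 * ψ p)) = -(g 0 p) * ψ p
      ring
    | f₁ :: fs'' =>
      have e5 : dx (g 1) p = g 1 p * (f₁ p - f₀ p) := by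
        have := hdx 0 (by simp) p
        simpa using this
      show -(dx (g 1) p * opProd fs'' ψ p + g 1 p * dx (opProd fs'' ψ) p)
          + ((g 1 p - g 0 p) * (dx (opProd fs'' ψ) p + f₁ p * opProd fs'' ψ p)
            + f₀ p * (-(g 1 p) * opProd fs'' ψ p))
          = -(g 0 p) * (dx (opProd fs'' ψ) p + f₁ p * opProd fs'' ψ p)
      rw [e5]
      ring

lemma contDiff_monomial (m : ℕ) (c : ℝ) : ContDiff ℝ (⊤ : ℕ∞) (fun q : ℝ × ℝ => (q.1 - c)^m) :=
  (contDiff_fst.sub contDiff_const).pow m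

lemma dy_monomial (m : ℕ) (c : ℝ) (p : ℝ × ℝ) :
    dy (fun q : ℝ × ℝ => (q.1 - c)^m) p = 0 := by
  show deriv (fun _ : ℝ => (p.1 - c)^m) p.2 = 0
  exact deriv_const _ _

lemma dxIter_monomial (m : ℕ) (c : ℝ) : ∀ k, dxIter k (fun q : ℝ × ℝ => (q.1 - c)^m)
    = fun p => (m.descFactorial k : ℝ) * (p.1 - c)^(m - k)
  | 0 => by funext p; simp [dxIter]
  | (k+1) => by
    funext p
    show dx (dxIter k _) p = _
    rw [dx_congr (g := fun p : ℝ × ℝ => (m.descFactorial k : ℝ) * (p.1 - c)^(m - k))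
      (fun q => by rw [dxIter_monomial m c k]) p]
    have H := (((hasDerivAt_id p.1).sub_const c).pow (m - k)).const_mul
      ((m.descFactorial k : ℝ))
    have hd : dx (fun p : ℝ × ℝ => (m.descFactorial k : ℝ) * (p.1 - c)^(m - k)) p
        = (m.descFactorial k : ℝ) * (((m - k : ℕ) : ℝ) * (p.1 - c)^(m - k - 1) * 1) := H.deriv
    rw [hd, Nat.descFactorial_succ, Nat.sub_sub]
    push_cast
    ring

lemma toda_sum_identity (n i : ℕ) (hi : i < n) (a : ℕ → ℕ → ℝ)
    (ha : ∀ i j, a i j = if i = j then 2 else if i + 1 = j ∨ j + 1 = i then -1 else 0)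
    (v : ℕ → ℝ) :
    ∑ j ∈ Finset.range n, a i j * v j
      = 2 * v i - (if i + 1 < n then v (i + 1) else 0) - (if 1 ≤ i then v (i - 1) else 0) := by
  have hsummand : ∀ j ∈ Finset.range n, a i j * v j
      = ((if j = i then 2 * v j else 0) + (if j = i + 1 then -v j else 0))
        + (if 1 ≤ i ∧ j = i - 1 then -v j else 0) := by
    intro j _
    rw [ha i j]
    split_ifs <;> first | (exfalso; omega) | ring1
  rw [Finset.sum_congr rfl hsummand, Finset.sum_add_distrib, Finset.sum_add_distrib]
  rw [Finset.sum_ite_eq' (Finset.range n) i (fun j => 2 * v j),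
    Finset.sum_ite_eq' (Finset.range n) (i + 1) (fun j => -v j)]
  have h3 : (∑ j ∈ Finset.range n, if 1 ≤ i ∧ j = i - 1 then -v j else 0)
      = if 1 ≤ i then -v (i - 1) else 0 := by
    by_cases h1 : 1 ≤ i
    · simp only [h1, true_and, if_true]
      rw [Finset.sum_ite_eq' (Finset.range n) (i - 1) (fun j => -v j)]
      rw [if_pos (Finset.mem_range.mpr (by omega))]
    · simp only [h1, false_and, if_false]
      simp
  rw [h3, if_pos (Finset.mem_range.mpr hi)]
  by_cases h2 : i + 1 < n <;> by_cases h1 : 1 ≤ i <;>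
    simp only [h1, h2, Finset.mem_range, if_true, if_false] <;> ring


def Efn (n : ℕ) (a : ℕ → ℕ → ℝ) (u : ℕ → ℝ × ℝ → ℝ) (i : ℕ) : ℝ × ℝ → ℝ :=
  fun p => Real.exp (∑ j ∈ Finset.range n, a i j * u j p)

def gfn (n : ℕ) (a : ℕ → ℕ → ℝ) (u : ℕ → ℝ × ℝ → ℝ) (i : ℕ) : ℝ × ℝ → ℝ :=
  if 1 ≤ i ∧ i ≤ n then Efn n a u (i - 1) else fun _ => 0

/-- For the `Aₙ` Toda field theory, with `f₀ = -u¹_x`,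
`f_k = u^k_x - u^{k+1}_x` (`1 ≤ k ≤ n-1`), `f_n = uⁿ_x`, one has `∑ f_k = 0` and the
coefficients `I_j` of the expansion
`(∂ + f₀)⋯(∂ + f_n) = ∂^{n+1} + ∑_{j=1}^n I_j ∂^{n-j}` satisfy `∂_y I_j = 0`.
Here `u i` denotes `u^{i+1}` (0-based indexing). -/
theorem stmt5 (n : ℕ) (hn : 1 ≤ n) (u : ℕ → ℝ × ℝ → ℝ)
    (hu : ∀ i, ContDiff ℝ (⊤ : ℕ∞) (u i))
    (a : ℕ → ℕ → ℝ)
    (ha : ∀ i j, a i j = if i = j then 2 else if i + 1 = j ∨ j + 1 = i then -1 else 0)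
    (htoda : ∀ i < n, ∀ p, dy (dx (u i)) p
      = -Real.exp (∑ j ∈ Finset.range n, a i j * u j p))
    (f : ℕ → ℝ × ℝ → ℝ)
    (hf : ∀ k p, f k p
      = (if 1 ≤ k then dx (u (k - 1)) p else 0) - (if k < n then dx (u k) p else 0))
    (I : ℕ → ℝ × ℝ → ℝ)
    (hexp : ∀ ψ : ℝ × ℝ → ℝ, ContDiff ℝ (⊤ : ℕ∞) ψ → ∀ p,
      opProd (List.ofFn fun k : Fin (n + 1) => f k) ψ p
        = dxIter (n + 1) ψ p + ∑ j ∈ Finset.Icc 1 n, I j p * dxIter (n - j) ψ p) :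
    (∀ p, ∑ k ∈ Finset.range (n + 1), f k p = 0) ∧
      (∀ j ∈ Finset.Icc 1 n, ∀ p, dy (I j) p = 0) := by
  have hux : ∀ i, ContDiff ℝ (⊤ : ℕ∞) (dx (u i)) := fun i => contDiff_dx (hu i)
  constructor
  · -- Part 1: the sum of the f's vanishes
    intro p
    have h1 : ∑ k ∈ Finset.range (n + 1), f k p
        = ∑ k ∈ Finset.range (n + 1),
          ((if 1 ≤ k then dx (u (k - 1)) p else 0) - (if k < n then dx (u k) p else 0)) :=
      Finset.sum_congr rfl fun k _ => hf k p
    rw [h1, Finset.sum_sub_distrib]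
    have h2 : ∑ k ∈ Finset.range (n + 1), (if 1 ≤ k then dx (u (k - 1)) p else 0)
        = ∑ k ∈ Finset.range n, dx (u k) p := by
      rw [Finset.sum_range_succ']
      simp
    have h3 : ∑ k ∈ Finset.range (n + 1), (if k < n then dx (u k) p else 0)
        = ∑ k ∈ Finset.range n, dx (u k) p := by
      rw [Finset.sum_range_succ, if_neg (lt_irrefl n), add_zero]
      exact Finset.sum_congr rfl fun k hk => if_pos (Finset.mem_range.mp hk)
    rw [h2, h3, sub_self]
  · -- Part 2
    have hEsm : ∀ i, ContDiff ℝ (⊤ : ℕ∞) (Efn n a u i) := fun i =>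
      Real.contDiff_exp.comp (ContDiff.sum fun j _ => contDiff_const.mul (hu j))
    have hgsm : ∀ i, ContDiff ℝ (⊤ : ℕ∞) (gfn n a u i) := by
      intro i
      unfold gfn
      split_ifs
      · exact hEsm _
      · exact contDiff_const
    have hffun : ∀ k, f k = fun p =>
        (if 1 ≤ k then dx (u (k - 1)) p else 0) - (if k < n then dx (u k) p else 0) :=
      fun k => funext (hf k)
    have hfsm : ∀ k, ContDiff ℝ (⊤ : ℕ∞) (f k) := by
      intro k
      rw [hffun k]
      by_cases h1 : 1 ≤ k <;> by_cases h2 : k < n <;>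
        simp only [h1, h2, if_true, if_false] <;>
        first
          | exact (hux _).sub (hux _)
          | exact (hux _).sub contDiff_const
          | exact contDiff_const.sub (hux _)
          | exact contDiff_const.sub contDiff_const
    -- value of dy (f i)
    have hdyf : ∀ i, i ≤ n → ∀ p, dy (f i) p = gfn n a u (i + 1) p - gfn n a u i p := by
      intro i hi p
      have hA : HasDerivAt (fun t => f i (p.1, t))
          ((if 1 ≤ i then dy (dx (u (i - 1))) p else 0)
            - (if i < n then dy (dx (u i)) p else 0)) p.2 := by
        have e : (fun t => f i (p.1, t)) = fun t =>
            (if 1 ≤ i then dx (u (i - 1)) (p.1, t) else 0)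
              - (if i < n then dx (u i) (p.1, t) else 0) := by
          funext t; exact hf i (p.1, t)
        rw [e]
        by_cases h1 : 1 ≤ i <;> by_cases h2 : i < n <;>
          simp only [h1, h2, if_true, if_false] <;>
          first
            | exact (hasDerivAtY (hux _) p).sub (hasDerivAtY (hux _) p)
            | exact (hasDerivAtY (hux _) p).sub (hasDerivAt_const _ _)
            | exact (hasDerivAt_const _ _).sub (hasDerivAtY (hux _) p)
            | exact (hasDerivAt_const _ _).sub (hasDerivAt_const _ _)
      have hdval : dy (f i) p = (if 1 ≤ i then dy (dx (u (i - 1))) p else 0)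
          - (if i < n then dy (dx (u i)) p else 0) := hA.deriv
      rw [hdval]
      rcases Nat.eq_zero_or_pos i with h0 | h1
      · subst h0
        rw [if_neg (by omega : ¬ (1:ℕ) ≤ 0), if_pos (by omega : 0 < n), htoda 0 hn p]
        unfold gfn
        rw [if_pos ⟨le_refl 1, hn⟩, if_neg (by omega)]
        show 0 - -Real.exp _ = Efn n a u 0 p - 0
        unfold Efn; ring
      · rcases Nat.lt_or_ge i n with h2 | h2
        · rw [if_pos (by omega : 1 ≤ i), if_pos h2, htoda (i - 1) (by omega) p, htoda i h2 p]
          unfold gfn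
          rw [if_pos ⟨by omega, by omega⟩, if_pos ⟨h1, by omega⟩]
          show -Real.exp _ - -Real.exp _ = Efn n a u (i + 1 - 1) p - Efn n a u (i - 1) p
          unfold Efn
          simp only [Nat.add_sub_cancel]
          ring
        · have hieq : i = n := le_antisymm hi h2
          subst hieq
          rw [if_pos (by omega : 1 ≤ i), if_neg (by omega : ¬ i < i), htoda (i - 1) (by omega) p]
          unfold gfn
          rw [if_neg (by omega : ¬ (1 ≤ i + 1 ∧ i + 1 ≤ i)), if_pos ⟨by omega, le_refl i⟩]
          show -Real.exp _ - 0 = 0 - Efn _ a u (i - 1) p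
          unfold Efn; ring
    -- value of dx (Efn i)
    have hdxE : ∀ i, i < n → ∀ p,
        dx (Efn n a u i) p = Efn n a u i p * (f (i + 1) p - f i p) := by
      intro i hi p
      have hS : HasDerivAt (fun t => ∑ j ∈ Finset.range n, a i j * u j (t, p.2))
          (∑ j ∈ Finset.range n, a i j * dx (u j) p) p.1 := by
        apply HasDerivAt.fun_sum
        intro j _
        exact (hasDerivAtX (hu j) p).const_mul (a i j)
      have hE : dx (Efn n a u i) p
          = Real.exp (∑ j ∈ Finset.range n, a i j * u j (p.1, p.2))
            * ∑ j ∈ Finset.range n, a i j * dx (u j) p := hS.exp.deriv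
      rw [hE, toda_sum_identity n i hi a ha (fun j => dx (u j) p)]
      have hf1 : f (i + 1) p = dx (u i) p - (if i + 1 < n then dx (u (i + 1)) p else 0) := by
        rw [hf (i + 1) p, if_pos (by omega)]
        simp only [Nat.add_sub_cancel]
      have hf2 : f i p = (if 1 ≤ i then dx (u (i - 1)) p else 0) - dx (u i) p := by
        rw [hf i p, if_pos hi]
      rw [hf1, hf2]
      show Efn n a u i p * _ = Efn n a u i p * _
      ring
    -- the list of coefficient functions
    have hlen : (List.ofFn fun k : Fin (n + 1) => f k).length = n + 1 := by simp
    have hget : ∀ i, i < n + 1 →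
        (List.ofFn fun k : Fin (n + 1) => f k).getD i (fun _ => 0) = f i := by
      intro i hi
      rw [List.getD_eq_getElem _ _ (by simpa using hi), List.getElem_ofFn]
    -- the master vanishing statement
    have hkey0 : ∀ ψ, ContDiff ℝ (⊤ : ℕ∞) ψ → (∀ p, dy ψ p = 0) →
        ∀ p, dy (opProd (List.ofFn fun k : Fin (n + 1) => f k) ψ) p = 0 := by
      intro ψ hψ hψy p
      have h := key (List.ofFn fun k : Fin (n + 1) => f k) (gfn n a u)
        (by
          intro h hh
          rw [List.mem_ofFn] at hh
          obtain ⟨k, rfl⟩ := hh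
          exact hfsm k)
        hgsm
        (by
          intro q
          rw [hlen]
          unfold gfn
          rw [if_neg (by omega)])
        (by
          intro i hi q
          rw [hlen] at hi
          rw [hget i hi]
          exact hdyf i (by omega) q)
        (by
          intro i hi q
          rw [hlen] at hi
          rw [hget (i + 1) (by omega), hget i (by omega)]
          have hg1 : gfn n a u (i + 1) = Efn n a u i := by
            unfold gfn
            rw [if_pos ⟨by omega, by omega⟩]
            simp only [Nat.add_sub_cancel]
          rw [hg1]
          exact hdxE i (by omega) q)
        ψ hψ hψy p
      rw [h]
      have hg0 : gfn n a u 0 p = 0 := by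
        unfold gfn
        rw [if_neg (by omega)]
      rw [hg0]
      ring
    -- conclude for each I j
    intro j hj p₀
    obtain ⟨hj1, hjn⟩ := Finset.mem_Icc.mp hj
    have hψsm := contDiff_monomial (n - j) p₀.1
    have hc : (Nat.factorial (n - j) : ℝ) ≠ 0 := Nat.cast_ne_zero.mpr ((n - j).factorial_ne_zero)
    have hval : ∀ t : ℝ, I j (p₀.1, t)
        = ((Nat.factorial (n - j) : ℝ))⁻¹
          * opProd (List.ofFn fun k : Fin (n + 1) => f k)
              (fun q : ℝ × ℝ => (q.1 - p₀.1) ^ (n - j)) (p₀.1, t) := by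
      intro t
      have hx := hexp (fun q : ℝ × ℝ => (q.1 - p₀.1) ^ (n - j)) hψsm (p₀.1, t)
      have h0 : dxIter (n + 1) (fun q : ℝ × ℝ => (q.1 - p₀.1) ^ (n - j)) (p₀.1, t) = 0 := by
        rw [dxIter_monomial]
        rw [Nat.descFactorial_eq_zero_iff_lt.mpr (by omega)]
        simp
      have hmain : dxIter (n - j) (fun q : ℝ × ℝ => (q.1 - p₀.1) ^ (n - j)) (p₀.1, t)
          = (Nat.factorial (n - j) : ℝ) := by
        rw [dxIter_monomial]
        simp [Nat.descFactorial_self]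
      have hterm : ∀ j' ∈ Finset.Icc 1 n, j' ≠ j →
          I j' (p₀.1, t) * dxIter (n - j') (fun q : ℝ × ℝ => (q.1 - p₀.1) ^ (n - j)) (p₀.1, t)
            = 0 := by
        intro j' hj' hne
        obtain ⟨h1', h2'⟩ := Finset.mem_Icc.mp hj'
        rw [dxIter_monomial]
        rcases lt_or_gt_of_ne hne with h | h
        · rw [Nat.descFactorial_eq_zero_iff_lt.mpr (by omega)]
          simp
        · have hnz : n - j - (n - j') ≠ 0 := by omega
          simp [zero_pow hnz]
      rw [h0, Finset.sum_eq_single j hterm (fun hnotin => absurd hj hnotin), hmain] at hx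
      rw [hx]
      field_simp
      ring
    show deriv (fun t => I j (p₀.1, t)) p₀.2 = 0
    rw [funext hval, deriv_const_mul_field]
    have hfin := hkey0 (fun q : ℝ × ℝ => (q.1 - p₀.1) ^ (n - j)) hψsm
      (dy_monomial (n - j) p₀.1) p₀
    rw [show deriv (fun t => opProd (List.ofFn fun k : Fin (n + 1) => f k)
        (fun q : ℝ × ℝ => (q.1 - p₀.1) ^ (n - j)) (p₀.1, t)) p₀.2
      = dy (opProd (List.ofFn fun k : Fin (n + 1) => f k)
        (fun q : ℝ × ℝ => (q.1 - p₀.1) ^ (n - j))) p₀ from rfl, hfin, mul_zero]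
end
end

section
/- Let u, v : ℝ × ℝ → ℝ satisfy the G_2 Toda system u_{xy} = -exp(2u - v), v_{xy} = -exp(-3u + 2v). Then the quantity I_1 = 6u_{xx} + 2v_{xx} - 6u_x^2 + 6 u_x v_x - 2 v_x^2 satisfies ∂_y I_1 = 0. -/
noncomputable section

namespace Stmt9Aux

lemma dx_eq (f : ℝ × ℝ → ℝ) (hf : ContDiff ℝ (⊤ : ℕ∞) f) :
    dx f = fun p => fderiv ℝ f p (1, 0) := by
  funext p
  have hL : HasDerivAt (fun t : ℝ => (t, p.2)) ((1 : ℝ), (0 : ℝ)) p.1 :=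
    (hasDerivAt_id p.1).prodMk (hasDerivAt_const p.1 p.2)
  have hF : HasFDerivAt f (fderiv ℝ f p) p := (hf.differentiable (by simp) p).hasFDerivAt
  have := (hF.comp_hasDerivAt p.1 hL)
  exact this.deriv

lemma dy_eq (f : ℝ × ℝ → ℝ) (hf : ContDiff ℝ (⊤ : ℕ∞) f) :
    dy f = fun p => fderiv ℝ f p (0, 1) := by
  funext p
  have hL : HasDerivAt (fun t : ℝ => (p.1, t)) ((0 : ℝ), (1 : ℝ)) p.2 :=
    (hasDerivAt_const p.2 p.1).prodMk (hasDerivAt_id p.2)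
  have hF : HasFDerivAt f (fderiv ℝ f p) p := (hf.differentiable (by simp) p).hasFDerivAt
  exact (hF.comp_hasDerivAt p.2 hL).deriv

lemma contDiff_dx (f : ℝ × ℝ → ℝ) (hf : ContDiff ℝ (⊤ : ℕ∞) f) : ContDiff ℝ (⊤ : ℕ∞) (dx f) := by
  rw [dx_eq f hf]
  exact (ContinuousLinearMap.apply ℝ ℝ ((1 : ℝ), (0 : ℝ))).contDiff.comp
    (hf.fderiv_right (by simp))

lemma dy_dx_comm (f : ℝ × ℝ → ℝ) (hf : ContDiff ℝ (⊤ : ℕ∞) f) (p : ℝ × ℝ) :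
    dy (dx f) p = dx (dy f) p := by
  have hf' : ∀ y, HasFDerivAt f (fderiv ℝ f y) y := fun y =>
    (hf.differentiable (by simp) y).hasFDerivAt
  have hf'' : HasFDerivAt (fderiv ℝ f) (fderiv ℝ (fderiv ℝ f) p) p :=
    (((hf.fderiv_right (m := (⊤ : ℕ∞)) (by simp)).differentiable (by simp)) p).hasFDerivAt
  have hsymm := second_derivative_symmetric hf' hf''
  have hX : dy (dx f) p = (fderiv ℝ (fderiv ℝ f) p) (0, 1) (1, 0) := by
    rw [dx_eq f hf]
    have hL : HasDerivAt (fun t : ℝ => (p.1, t)) ((0 : ℝ), (1 : ℝ)) p.2 :=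
      (hasDerivAt_const p.2 p.1).prodMk (hasDerivAt_id p.2)
    have h1 : HasDerivAt (fun t : ℝ => fderiv ℝ f (p.1, t))
        (fderiv ℝ (fderiv ℝ f) p (0, 1)) p.2 := hf''.comp_hasDerivAt p.2 hL
    have h2 := (ContinuousLinearMap.apply ℝ ℝ
        ((1 : ℝ), (0 : ℝ))).hasFDerivAt.comp_hasDerivAt p.2 h1
    exact h2.deriv
  have hY : dx (dy f) p = (fderiv ℝ (fderiv ℝ f) p) (1, 0) (0, 1) := by
    rw [dy_eq f hf]
    have hL : HasDerivAt (fun t : ℝ => (t, p.2)) ((1 : ℝ), (0 : ℝ)) p.1 :=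
      (hasDerivAt_id p.1).prodMk (hasDerivAt_const p.1 p.2)
    have h1 : HasDerivAt (fun t : ℝ => fderiv ℝ f (t, p.2))
        (fderiv ℝ (fderiv ℝ f) p (1, 0)) p.1 := hf''.comp_hasDerivAt p.1 hL
    have h2 := (ContinuousLinearMap.apply ℝ ℝ
        ((0 : ℝ), (1 : ℝ))).hasFDerivAt.comp_hasDerivAt p.1 h1
    exact h2.deriv
  rw [hX, hY, hsymm]

lemma hasDerivAt_sliceY (g : ℝ × ℝ → ℝ) (hg : ContDiff ℝ (⊤ : ℕ∞) g) (p : ℝ × ℝ) :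
    HasDerivAt (fun t => g (p.1, t)) (dy g p) p.2 := by
  have : DifferentiableAt ℝ (fun t => g (p.1, t)) p.2 :=
    ((hg.differentiable (by simp)).comp
      ((differentiable_const p.1).prodMk differentiable_id)) p.2
  exact this.hasDerivAt

lemma hasDerivAt_sliceX (g : ℝ × ℝ → ℝ) (hg : ContDiff ℝ (⊤ : ℕ∞) g) (p : ℝ × ℝ) :
    HasDerivAt (fun t => g (t, p.2)) (dx g p) p.1 := by
  have : DifferentiableAt ℝ (fun t => g (t, p.2)) p.1 :=
    ((hg.differentiable (by simp)).comp
      (differentiable_id.prodMk (differentiable_const p.2))) p.1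
  exact this.hasDerivAt

end Stmt9Aux

open Stmt9Aux in
/-- For the `G₂` Toda system, the degree-2 characteristic integral
`I₁ = 6u_{xx} + 2v_{xx} - 6u_x² + 6u_x v_x - 2v_x²` satisfies `∂_y I₁ = 0`. -/
theorem stmt9 (u v : ℝ × ℝ → ℝ) (hu : ContDiff ℝ (⊤ : ℕ∞) u) (hv : ContDiff ℝ (⊤ : ℕ∞) v)
    (hueq : ∀ p, dy (dx u) p = -Real.exp (2 * u p - v p))
    (hveq : ∀ p, dy (dx v) p = -Real.exp (-3 * u p + 2 * v p)) :
    ∀ p, dy (fun q => 6 * dx (dx u) q + 2 * dx (dx v) q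
      - 6 * (dx u q) ^ 2 + 6 * dx u q * dx v q - 2 * (dx v q) ^ 2) p = 0 := by
  intro p
  have hux := contDiff_dx u hu
  have hvx := contDiff_dx v hv
  -- mixed third derivatives
  have h1 : dy (dx (dx u)) p = -(Real.exp (2 * u p - v p) * (2 * dx u p - dx v p)) := by
    rw [dy_dx_comm (dx u) hux]
    have heq : dy (dx u) = fun q => -Real.exp (2 * u q - v q) := funext hueq
    rw [heq]
    have hU := hasDerivAt_sliceX u hu p
    have hV := hasDerivAt_sliceX v hv p
    have h : HasDerivAt (fun t => -Real.exp (2 * u (t, p.2) - v (t, p.2)))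
        (-(Real.exp (2 * u p - v p) * (2 * dx u p - dx v p))) p.1 := by
      have := (((hU.const_mul 2).sub hV).exp).neg
      simpa [Pi.neg_def] using this
    exact h.deriv
  have h2 : dy (dx (dx v)) p =
      -(Real.exp (-3 * u p + 2 * v p) * (-3 * dx u p + 2 * dx v p)) := by
    rw [dy_dx_comm (dx v) hvx]
    have heq : dy (dx v) = fun q => -Real.exp (-3 * u q + 2 * v q) := funext hveq
    rw [heq]
    have hU := hasDerivAt_sliceX u hu p
    have hV := hasDerivAt_sliceX v hv p
    have h : HasDerivAt (fun t => -Real.exp (-3 * u (t, p.2) + 2 * v (t, p.2)))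
        (-(Real.exp (-3 * u p + 2 * v p) * (-3 * dx u p + 2 * dx v p))) p.1 := by
      have := (((hU.const_mul (-3)).add (hV.const_mul 2)).exp).neg
      simpa [Pi.neg_def] using this
    exact h.deriv
  -- slice derivatives in y
  have hA := hasDerivAt_sliceY (dx (dx u)) (contDiff_dx _ hux) p
  have hB := hasDerivAt_sliceY (dx (dx v)) (contDiff_dx _ hvx) p
  have hC := hasDerivAt_sliceY (dx u) hux p
  have hD := hasDerivAt_sliceY (dx v) hvx p
  have H : HasDerivAt (fun t => 6 * dx (dx u) (p.1, t) + 2 * dx (dx v) (p.1, t)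
      - 6 * (dx u (p.1, t)) ^ 2 + 6 * dx u (p.1, t) * dx v (p.1, t)
      - 2 * (dx v (p.1, t)) ^ 2)
      (6 * dy (dx (dx u)) p + 2 * dy (dx (dx v)) p
        - 6 * (2 * dx u p ^ 1 * dy (dx u) p)
        + (6 * dy (dx u) p * dx v p + 6 * dx u p * dy (dx v) p)
        - 2 * (2 * dx v p ^ 1 * dy (dx v) p)) p.2 := by
    exact ((((hA.const_mul 6).add (hB.const_mul 2)).sub
      ((hC.pow 2).const_mul 6)).add ((hC.const_mul 6).mul hD)).sub
      ((hD.pow 2).const_mul 2)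
  have := H.deriv
  show dy _ p = 0
  unfold dy
  rw [this, h1, h2, hueq p, hveq p]
  ring
end
end
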